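/- arXiv:1711.04186 — 4 statements merged into one kernel-verified Lean document; each statement's English description precedes it below -/
import Mathlib

section
/- For every additive character s : A → ℂ and every c ∈ C, the generalized projectors commute pairwise: 𝒜_s ∘ ℬ_c = ℬ_c ∘ 𝒜_s. -/
/-!
`𝒜_s` is a linear combination of the shifts `P_{u(a)}` and `ℬ_c` one of the clocks `Q_{r ∘ v}`.
A shift `P_t` commutes with a clock `Q_m` as soon as `m` is `t`-periodic, and `v ∘ u = 0` makes
every `r ∘ v` periodic under `u(A)`.
-/

open scoped BigOperators

noncomputable section

variable {A B C : Type} [AddCommGroup A] [Fintype A] [AddCommGroup B] [Fintype B]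
  [DecidableEq B] [AddCommGroup C] [Fintype C]

/-- The shift operator `P_t` on the Hilbert space `𝓗 = B → ℂ`: `(P_t ψ)(g) = ψ(g - t)`. -/
def shiftOp (t : B) : (B → ℂ) →ₗ[ℂ] (B → ℂ) where
  toFun ψ := fun g => ψ (g - t)
  map_add' _ _ := rfl
  map_smul' _ _ := rfl

/-- The clock operator `Q_m` on `𝓗 = B → ℂ`: `(Q_m ψ)(g) = m(g) ψ(g)`. -/
def clockOp (m : B → ℂ) : (B → ℂ) →ₗ[ℂ] (B → ℂ) where
  toFun ψ := fun g => m g * ψ g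
  map_add' ψ φ := by funext g; simp [mul_add]
  map_smul' c ψ := by funext g; simp [smul_eq_mul]; ring

/-- The basis vector `δ_f ∈ 𝓗`. -/
def deltaVec (f : B) : B → ℂ := fun g => if g = f then 1 else 0

/-- The generalized gauge projector `𝒜_s = (1/|A|) Σ_{a ∈ A} s(a) • P_{u(a)}`. -/
def gaugeOp (u : A →+ B) (s : AddChar A ℂ) : (B → ℂ) →ₗ[ℂ] (B → ℂ) :=
  (Fintype.card A : ℂ)⁻¹ • ∑ a : A, s a • shiftOp (u a)

/-- The holonomy projector `ℬ_c = (1/|C|) Σ_r r(c) • Q_{r ∘ v}`, the sum running over all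
additive characters `r : C → ℂ`. -/
def holOp (v : B →+ C) (c : C) : (B → ℂ) →ₗ[ℂ] (B → ℂ) :=
  (Fintype.card C : ℂ)⁻¹ • ∑ r : AddChar C ℂ, r c • clockOp (fun g => r (v g))

/-- The ground state projector `Π₀ = 𝒜₀ ∘ ℬ₀`. -/
def groundProj (u : A →+ B) (v : B →+ C) : (B → ℂ) →ₗ[ℂ] (B → ℂ) :=
  gaugeOp u 1 ∘ₗ holOp v 0

theorem commute_shiftOp_clockOp {t : B} {m : B → ℂ} (hm : ∀ g, m (g - t) = m g) :
    Commute (shiftOp t) (clockOp m) := by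
  ext ψ g
  simp [shiftOp, clockOp, hm]

theorem commute_gaugeOp_clockOp (u : A →+ B) (s : AddChar A ℂ) {m : B → ℂ}
    (hm : ∀ a g, m (g - u a) = m g) : Commute (gaugeOp u s) (clockOp m) :=
  .smul_left (.sum_left _ _ _ fun a _ => (commute_shiftOp_clockOp (hm a)).smul_left _) _

/-- the generalized projectors `𝒜_s` and `ℬ_c` commute pairwise. -/
theorem gaugeOp_commutes_holOp (u : A →+ B) (v : B →+ C) (hvu : v.comp u = 0)
    (s : AddChar A ℂ) (c : C) :
    gaugeOp u s ∘ₗ holOp v c = holOp v c ∘ₗ gaugeOp u s := by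
  have hvu_apply (a : A) : v (u a) = 0 := DFunLike.congr_fun hvu a
  have hv_periodic (r : AddChar C ℂ) (a : A) (g : B) : r (v (g - u a)) = r (v g) := by
    rw [map_sub, hvu_apply, sub_zero]
  exact Commute.eq <| .smul_right (.sum_right _ _ _ fun r _ =>
    (commute_gaugeOp_clockOp u s (hv_periodic r)).smul_right _) _
end
end

section
/- For every f ∈ B: Π₀ δ_f = 𝒜₀ δ_f if v(f) = 0, and Π₀ δ_f = 0 otherwise; moreover, for every f ∈ B with v(f) = 0 the vector 𝒜₀ δ_f is a ground state, i.e. Π₀ (𝒜₀ δ_f) = 𝒜₀ δ_f. -/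
open scoped BigOperators

noncomputable section

variable {A B C : Type} [AddCommGroup A] [Fintype A] [AddCommGroup B] [Fintype B]
  [DecidableEq B] [AddCommGroup C] [Fintype C]

/-! By orthogonality of characters, `ℬ₀` multiplies pointwise by the indicator of `ker v`, so it
fixes `δ_f` for `v f = 0` and kills it otherwise. Since `v ∘ u = 0`, every shift `P_{u a}` preserves
`ker v` and hence commutes with `ℬ₀`, so `ℬ₀` commutes with `𝒜₀`; and `𝒜₀`, an average over a group
of shifts, is idempotent. Hence `Π₀ 𝒜₀ = 𝒜₀ 𝒜₀ ℬ₀ = Π₀`, which reduces the ground-state claim to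
the first one. -/

section

variable {A B C : Type} [AddCommGroup A] [Fintype A] [AddCommGroup B] [AddCommGroup C] [Fintype C]

theorem shiftOp_apply (t : B) (ψ : B → ℂ) (g : B) : shiftOp t ψ g = ψ (g - t) := rfl

theorem shiftOp_add (s t : B) : shiftOp (s + t) = shiftOp s ∘ₗ shiftOp t := by
  ext ψ g
  simp only [LinearMap.comp_apply, shiftOp_apply, sub_add_eq_sub_sub]

theorem gaugeOp_comp_shiftOp (u : A →+ B) (s : AddChar A ℂ) (a : A) :
    gaugeOp u s ∘ₗ shiftOp (u a) = s (-a) • gaugeOp u s := by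
  have reindex : ∑ b, s b • shiftOp (u (b + a)) = s (-a) • ∑ b, s b • shiftOp (u b) := by
    rw [Finset.smul_sum]
    refine Fintype.sum_equiv (Equiv.addRight a) _ _ fun b => ?_
    rw [Equiv.coe_addRight, smul_smul, ← AddChar.map_add_eq_mul, neg_add_cancel_comm_assoc]
  rw [gaugeOp, ← Module.End.mul_eq_comp, smul_mul_assoc, Finset.sum_mul]
  simp only [smul_mul_assoc, Module.End.mul_eq_comp, ← shiftOp_add, ← map_add]
  rw [reindex, smul_comm]

theorem gaugeOp_comp_self (u : A →+ B) (s : AddChar A ℂ) :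
    gaugeOp u s ∘ₗ gaugeOp u s = gaugeOp u s := by
  nth_rw 2 [gaugeOp]
  rw [← Module.End.mul_eq_comp, mul_smul_comm, Finset.mul_sum]
  simp only [mul_smul_comm, Module.End.mul_eq_comp, gaugeOp_comp_shiftOp, smul_smul,
    ← AddChar.map_add_eq_mul, add_neg_cancel, AddChar.map_zero_eq_one, one_smul,
    Finset.sum_const, Finset.card_univ, ← Nat.cast_smul_eq_nsmul ℂ]
  rw [inv_mul_cancel₀ (Nat.cast_ne_zero.2 Fintype.card_ne_zero), one_smul]

theorem holOp_apply [DecidableEq C] (v : B →+ C) (c : C) (ψ : B → ℂ) (g : B) :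
    holOp v c ψ g = if c + v g = 0 then ψ g else 0 := by
  simp only [holOp, LinearMap.smul_apply, LinearMap.coe_sum, Finset.sum_apply, clockOp,
    LinearMap.coe_mk, AddHom.coe_mk, Pi.smul_apply, smul_eq_mul, ← mul_assoc,
    ← AddChar.map_add_eq_mul, ← Finset.sum_mul, AddChar.sum_apply_eq_ite]
  split_ifs <;> simp [Fintype.card_ne_zero]

theorem holOp_deltaVec_of_add_eq_zero [DecidableEq B] (v : B →+ C) {c : C} {f : B}
    (hf : c + v f = 0) : holOp v c (deltaVec f) = deltaVec f := by
  classical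
  ext g
  rw [holOp_apply]
  by_cases hg : g = f <;> simp [deltaVec, hg, hf]

theorem holOp_deltaVec_of_add_ne_zero [DecidableEq B] (v : B →+ C) {c : C} {f : B}
    (hf : c + v f ≠ 0) : holOp v c (deltaVec f) = 0 := by
  classical
  ext g
  rw [holOp_apply]
  by_cases hg : g = f <;> simp [deltaVec, hg, hf]

theorem holOp_comp_shiftOp (v : B →+ C) (c : C) {t : B} (ht : v t = 0) :
    holOp v c ∘ₗ shiftOp t = shiftOp t ∘ₗ holOp v c := by
  classical
  ext ψ g
  simp only [LinearMap.comp_apply, holOp_apply, shiftOp_apply, map_sub, ht, sub_zero]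

theorem holOp_comp_gaugeOp {u : A →+ B} {v : B →+ C} (hvu : v.comp u = 0) (c : C)
    (s : AddChar A ℂ) : holOp v c ∘ₗ gaugeOp u s = gaugeOp u s ∘ₗ holOp v c := by
  have hvu' (a : A) : v (u a) = 0 := DFunLike.congr_fun hvu a
  simp only [gaugeOp, ← Module.End.mul_eq_comp, mul_smul_comm, smul_mul_assoc, Finset.mul_sum,
    Finset.sum_mul]
  simp only [Module.End.mul_eq_comp, holOp_comp_shiftOp v c (hvu' _)]

theorem groundProj_comp_gaugeOp {u : A →+ B} {v : B →+ C} (hvu : v.comp u = 0) :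
    groundProj u v ∘ₗ gaugeOp u 1 = groundProj u v := by
  rw [groundProj, LinearMap.comp_assoc, holOp_comp_gaugeOp hvu, ← LinearMap.comp_assoc,
    gaugeOp_comp_self]

end

/-- `Π₀ δ_f = 𝒜₀ δ_f` if `v(f) = 0`, `Π₀ δ_f = 0` otherwise; and for `f` with
`v(f) = 0` the vector `𝒜₀ δ_f` is a ground state: `Π₀ (𝒜₀ δ_f) = 𝒜₀ δ_f`. -/
theorem groundProj_on_basis (u : A →+ B) (v : B →+ C) (hvu : v.comp u = 0) (f : B) :
    (v f = 0 → groundProj u v (deltaVec f) = gaugeOp u 1 (deltaVec f)) ∧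
    (v f ≠ 0 → groundProj u v (deltaVec f) = 0) ∧
    (v f = 0 → groundProj u v (gaugeOp u 1 (deltaVec f)) = gaugeOp u 1 (deltaVec f)) := by
  have on_kernel (hf : v f = 0) : groundProj u v (deltaVec f) = gaugeOp u 1 (deltaVec f) := by
    rw [groundProj, LinearMap.comp_apply, holOp_deltaVec_of_add_eq_zero v (by rwa [zero_add])]
  refine ⟨on_kernel, fun hf => ?_, fun hf => ?_⟩
  · rw [groundProj, LinearMap.comp_apply, holOp_deltaVec_of_add_ne_zero v (by rwa [zero_add]),
      map_zero]
  · rw [← LinearMap.comp_apply, groundProj_comp_gaugeOp hvu, on_kernel hf]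
end
end

section
/- The range of Π₀ equals the linear span of the set {𝒜₀ δ_f : f ∈ B, v(f) = 0}; equivalently, a vector ψ ∈ 𝓗 satisfies Π₀ ψ = ψ if and only if ψ lies in this span. -/
open scoped BigOperators

/-! By character orthogonality `ℬ₀` is multiplication by the indicator of `ker v`, so
`Π₀ ψ = Σ_{v f = 0} ψ(f) 𝒜₀ δ_f` lies in the span. Conversely, since `v ∘ u = 0`, the vector
`𝒜₀ δ_f` with `v f = 0` is supported on `f + u(A) ⊆ ker v`, where `ℬ₀` acts as the identity,
and `𝒜₀` is idempotent; so `Π₀` is a projection onto the span. -/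

lemma sum_smul_deltaVec {B : Type} [Fintype B] [DecidableEq B] (ψ : B → ℂ) :
    ∑ f : B, ψ f • deltaVec f = ψ := by
  funext g
  simp [deltaVec, Finset.sum_apply]

section

variable {A B C : Type} [AddCommGroup A] [Fintype A] [AddCommGroup B] [AddCommGroup C]

lemma gaugeOp_one_apply (u : A →+ B) (ψ : B → ℂ) (g : B) :
    gaugeOp u 1 ψ g = (Fintype.card A : ℂ)⁻¹ * ∑ a : A, ψ (g - u a) := by
  simp [gaugeOp, shiftOp, LinearMap.sum_apply, Finset.sum_apply]

lemma holOp_zero_apply [Fintype C] [DecidableEq C] (v : B →+ C) (ψ : B → ℂ) (g : B) :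
    holOp v 0 ψ g = if v g = 0 then ψ g else 0 := by
  have hC : (Fintype.card C : ℂ) ≠ 0 := Nat.cast_ne_zero.2 Fintype.card_ne_zero
  have h : holOp v 0 ψ g = (Fintype.card C : ℂ)⁻¹ * ∑ r : AddChar C ℂ, r (v g) * ψ g := by
    simp [holOp, clockOp, LinearMap.sum_apply, Finset.sum_apply]
  rw [h, ← Finset.sum_mul, AddChar.sum_apply_eq_ite]
  split_ifs
  · field_simp
  · simp

lemma gaugeOp_one_gaugeOp_one (u : A →+ B) (ψ : B → ℂ) :
    gaugeOp u 1 (gaugeOp u 1 ψ) = gaugeOp u 1 ψ := by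
  have hA : (Fintype.card A : ℂ) ≠ 0 := Nat.cast_ne_zero.2 Fintype.card_ne_zero
  funext g
  have shift_invariant (a : A) : ∑ b : A, ψ (g - u a - u b) = ∑ b : A, ψ (g - u b) :=
    Fintype.sum_equiv (Equiv.addLeft a) _ _ fun b => by simp [sub_sub]
  simp only [gaugeOp_one_apply, Finset.mul_sum, shift_invariant, Finset.sum_const,
    Finset.card_univ, nsmul_eq_mul]
  field_simp

lemma holOp_zero_eq_self [Fintype C] (v : B →+ C) {ψ : B → ℂ} (hψ : ∀ g, v g ≠ 0 → ψ g = 0) :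
    holOp v 0 ψ = ψ := by
  classical
  funext g
  rw [holOp_zero_apply]
  split_ifs with hg
  · rfl
  · exact (hψ g hg).symm

lemma gaugeOp_one_apply_eq_zero {u : A →+ B} {v : B →+ C} (hvu : v.comp u = 0)
    {ψ : B → ℂ} (hψ : ∀ g, v g ≠ 0 → ψ g = 0) {g : B} (hg : v g ≠ 0) : gaugeOp u 1 ψ g = 0 := by
  have hvu' (a : A) : v (u a) = 0 := DFunLike.congr_fun hvu a
  simp [gaugeOp_one_apply, hψ, hg, hvu']

lemma groundProj_gaugeOp_one_deltaVec [DecidableEq B] [Fintype C] {u : A →+ B} {v : B →+ C}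
    (hvu : v.comp u = 0) {f : B} (hf : v f = 0) :
    groundProj u v (gaugeOp u 1 (deltaVec f)) = gaugeOp u 1 (deltaVec f) := by
  have hδ (g : B) (hg : v g ≠ 0) : deltaVec f g = 0 := if_neg (by rintro rfl; exact hg hf)
  rw [groundProj, LinearMap.comp_apply,
    holOp_zero_eq_self v fun g => gaugeOp_one_apply_eq_zero hvu hδ, gaugeOp_one_gaugeOp_one]

lemma groundProj_apply_mem_span [Fintype B] [DecidableEq B] [Fintype C] (u : A →+ B)
    (v : B →+ C) (ψ : B → ℂ) :
    groundProj u v ψ ∈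
      Submodule.span ℂ {ψ : B → ℂ | ∃ f : B, v f = 0 ∧ ψ = gaugeOp u 1 (deltaVec f)} := by
  classical
  rw [groundProj, LinearMap.comp_apply, ← sum_smul_deltaVec (holOp v 0 ψ), map_sum]
  refine Submodule.sum_mem _ fun f _ => ?_
  rw [map_smul, holOp_zero_apply]
  split_ifs with hf
  · exact Submodule.smul_mem _ _ (Submodule.subset_span ⟨f, hf, rfl⟩)
  · rw [zero_smul]
    exact Submodule.zero_mem _

lemma isProj_groundProj [Fintype B] [DecidableEq B] [Fintype C] {u : A →+ B} {v : B →+ C}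
    (hvu : v.comp u = 0) :
    LinearMap.IsProj
      (Submodule.span ℂ {ψ : B → ℂ | ∃ f : B, v f = 0 ∧ ψ = gaugeOp u 1 (deltaVec f)})
      (groundProj u v) where
  map_mem := groundProj_apply_mem_span u v
  map_id := Submodule.span_le (p := LinearMap.eqLocus (groundProj u v) LinearMap.id).2 <| by
    rintro _ ⟨f, hf, rfl⟩
    exact groundProj_gaugeOp_one_deltaVec hvu hf

end

variable {A B C : Type} [AddCommGroup A] [Fintype A] [AddCommGroup B] [Fintype B]
  [DecidableEq B] [AddCommGroup C] [Fintype C]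

/-- the range of `Π₀` is the span of `{𝒜₀ δ_f : v(f) = 0}`; equivalently,
`Π₀ ψ = ψ` iff `ψ` lies in this span. -/
theorem groundProj_range_eq_span (u : A →+ B) (v : B →+ C) (hvu : v.comp u = 0) :
    LinearMap.range (groundProj u v) =
      Submodule.span ℂ {ψ : B → ℂ | ∃ f : B, v f = 0 ∧ ψ = gaugeOp u 1 (deltaVec f)} ∧
    ∀ ψ : B → ℂ, groundProj u v ψ = ψ ↔
      ψ ∈ Submodule.span ℂ {ψ : B → ℂ | ∃ f : B, v f = 0 ∧ ψ = gaugeOp u 1 (deltaVec f)} :=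
  ⟨(isProj_groundProj hvu).range, fun _ => (isProj_groundProj hvu).mem_iff_map_id.symm⟩
end

section
/- The assignment sending a family of cohomology classes ([f_n])_n ∈ ∏_n H^n(C, H_{n−p}(G)) to the class [α_φ(f)] ∈ H^p(C,G) is a well-defined injective group homomorphism α_φ^p : ∏_n H^n(C, H_{n−p}(G)) → H^p(C,G); in particular its value does not depend on the chosen cocycle representatives f_n. -/
noncomputable section

/-- Transport along an equality of indices, as a homomorphism of the groups in a family. -/
def castHom (F : ℤ → Type*) [∀ n, AddCommGroup (F n)] {a b : ℤ} (h : a = b) :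
    F a →+ F b := by subst h; exact AddMonoidHom.id (F a)

/-- The coboundary `δ^p` on `p`-maps between two chain complexes of abelian groups:
`(δ^p f)_n = f_{n-1} ∘ ∂_n - (-1)^p ∂'_{n-p} ∘ f_n`. -/
def homDelta (C C' : ℤ → Type*) [∀ n, AddCommGroup (C n)] [∀ n, AddCommGroup (C' n)]
    (d : ∀ n : ℤ, C n →+ C (n - 1)) (d' : ∀ n : ℤ, C' n →+ C' (n - 1))
    (p : ℤ) (f : ∀ n : ℤ, C n →+ C' (n - p)) (n : ℤ) : C n →+ C' (n - (p + 1)) :=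
  (castHom C' (show n - 1 - p = n - (p + 1) by ring)).comp ((f (n - 1)).comp (d n))
    - (p.negOnePow : ℤ) •
        (castHom C' (show n - p - 1 = n - (p + 1) by ring)).comp ((d' (n - p)).comp (f n))

/-- The `n`-cycles `ker(∂_n)` of a chain complex of abelian groups. -/
def cyclesSub (G : ℤ → Type*) [∀ n, AddCommGroup (G n)]
    (dG : ∀ n : ℤ, G n →+ G (n - 1)) (n : ℤ) : AddSubgroup (G n) :=
  (dG n).ker

/-- The `n`-boundaries `im(∂_{n+1})` of a chain complex of abelian groups. -/
def boundariesSub (G : ℤ → Type*) [∀ n, AddCommGroup (G n)]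
    (dG : ∀ n : ℤ, G n →+ G (n - 1)) (n : ℤ) : AddSubgroup (G n) :=
  ((dG (n + 1)).range).map (castHom G (show n + 1 - 1 = n by ring))

/-- The homology group `H_n(G) = ker(∂_n)/im(∂_{n+1})`. -/
abbrev homologyGrp (G : ℤ → Type*) [∀ n, AddCommGroup (G n)]
    (dG : ∀ n : ℤ, G n →+ G (n - 1)) (n : ℤ) : Type _ :=
  ↥(cyclesSub G dG n) ⧸ (boundariesSub G dG n).addSubgroupOf (cyclesSub G dG n)

/-- The canonical projection `π_n : ker(∂_n) → H_n(G)`. -/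
def homologyProj (G : ℤ → Type*) [∀ n, AddCommGroup (G n)]
    (dG : ∀ n : ℤ, G n →+ G (n - 1)) (n : ℤ) :
    ↥(cyclesSub G dG n) →+ homologyGrp G dG n :=
  QuotientAddGroup.mk' ((boundariesSub G dG n).addSubgroupOf (cyclesSub G dG n))

/-- The coboundary `d_n : Hom(C_n, M) → Hom(C_{n+1}, M)`, `d_n(h) = h ∘ ∂^C_{n+1}`. -/
def dualD (C : ℤ → Type*) [∀ n, AddCommGroup (C n)] (dC : ∀ n : ℤ, C n →+ C (n - 1))
    (M : Type*) [AddCommGroup M] (n : ℤ) : (C n →+ M) →+ (C (n + 1) →+ M) where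
  toFun h := h.comp ((castHom C (show n + 1 - 1 = n by ring)).comp (dC (n + 1)))
  map_zero' := by ext x; simp
  map_add' h h' := by ext x; simp

/-- The `n`-cocycles of `C` with coefficients in `M`. -/
def cocyclesSub (C : ℤ → Type*) [∀ n, AddCommGroup (C n)] (dC : ∀ n : ℤ, C n →+ C (n - 1))
    (M : Type*) [AddCommGroup M] (n : ℤ) : AddSubgroup (C n →+ M) :=
  (dualD C dC M n).ker

/-- The `n`-coboundaries of `C` with coefficients in `M`. -/
def coboundariesSub (C : ℤ → Type*) [∀ n, AddCommGroup (C n)]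
    (dC : ∀ n : ℤ, C n →+ C (n - 1)) (M : Type*) [AddCommGroup M] (n : ℤ) :
    AddSubgroup (C n →+ M) :=
  ((dualD C dC M (n - 1)).range).map
    (castHom (fun k => C k →+ M) (show n - 1 + 1 = n by ring))

/-- The cohomology `H^n(C,M) = ker(d_n)/im(d_{n-1})` of `C` with coefficients in `M`. -/
abbrev cohomologyGrp (C : ℤ → Type*) [∀ n, AddCommGroup (C n)]
    (dC : ∀ n : ℤ, C n →+ C (n - 1)) (M : Type*) [AddCommGroup M] (n : ℤ) : Type _ :=
  ↥(cocyclesSub C dC M n) ⧸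
    (coboundariesSub C dC M n).addSubgroupOf (cocyclesSub C dC M n)

/-- The coboundary `δ^p : hom(C,G)^p → hom(C,G)^{p+1}` as a group homomorphism. -/
def bigDelta (C G : ℤ → Type*) [∀ n, AddCommGroup (C n)] [∀ n, AddCommGroup (G n)]
    (dC : ∀ n : ℤ, C n →+ C (n - 1)) (dG : ∀ n : ℤ, G n →+ G (n - 1)) (p : ℤ) :
    (∀ n : ℤ, C n →+ G (n - p)) →+ (∀ n : ℤ, C n →+ G (n - (p + 1))) where
  toFun f := homDelta C G dC dG p f
  map_zero' := by
    funext n; ext x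
    simp [homDelta]
  map_add' f g := by
    funext n; ext x
    simp [homDelta]
    abel

/-- The cohomology `H^p(C,G) = ker(δ^p)/im(δ^{p-1})` of `C` with coefficients in the chain
complex `G`. -/
abbrev homComplexCohomology (C G : ℤ → Type*) [∀ n, AddCommGroup (C n)]
    [∀ n, AddCommGroup (G n)] (dC : ∀ n : ℤ, C n →+ C (n - 1))
    (dG : ∀ n : ℤ, G n →+ G (n - 1)) (p : ℤ) : Type _ :=
  ↥((bigDelta C G dC dG p).ker) ⧸
    (((bigDelta C G dC dG (p - 1)).range).map
        (castHom (fun q => ∀ n : ℤ, C n →+ G (n - q)) (show p - 1 + 1 = p by ring))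
      ).addSubgroupOf ((bigDelta C G dC dG p).ker)

/-!
If every `f_n` is a coboundary `u_n ∘ ∂`, then `α_φ(f)` is the coboundary of the
`(p-1)`-map `φ ∘ u`, so `α_φ` descends to cohomology.

For injectivity, suppose `φ ∘ f_m = g_{m-1} ∘ ∂ ± ∂ ∘ g_m`. Then `g_{m-1}` sends boundaries
of `C` to cycles of `G`, with `π ∘ g_{m-1} ∘ ∂ = f_m`. It also sends cycles `y` of `C` to
cycles: there the relation in degree `m-1` says that `φ(f_{m-1} y)` is a boundary, and since
`φ` is a section of `π` this forces `∂ g_{m-1} y = 0`. Since `C_{m-2}` is free of finite rank,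
so is `∂(C_{m-1})`; hence the cycles of `C_{m-1}` are a direct summand, `π ∘ g_{m-1}`
extends from them to some `u` on `C_{m-1}`, and `f_m = u ∘ ∂` is a coboundary.
-/

theorem AddMonoidHom.exists_injective_comp_eq_of_ker_eq {A B Q : Type*} [AddGroup A]
    [AddGroup B] [AddGroup Q] (π : A →+ B) (hπ : Function.Surjective π) (F : A →+ Q)
    (h : F.ker = π.ker) : ∃ α : B →+ Q, Function.Injective α ∧ ∀ a, α (π a) = F a := by
  let e : A ⧸ F.ker ≃+ B := (QuotientAddGroup.quotientAddEquivOfEq h).trans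
    (QuotientAddGroup.quotientKerEquivOfSurjective π hπ)
  refine ⟨(QuotientAddGroup.kerLift F).comp e.symm.toAddMonoidHom,
    (QuotientAddGroup.kerLift_injective F).comp e.symm.injective, fun a => ?_⟩
  have he : e.symm (π a) = (a : A ⧸ F.ker) := e.symm_apply_eq.2 rfl
  simp only [AddMonoidHom.comp_apply, AddEquiv.coe_toAddMonoidHom, he,
    QuotientAddGroup.kerLift_mk]

/-- A section of `A → range d` (which exists by projectivity) yields a retraction onto `ker d`. -/
theorem LinearMap.exists_extend_ker_of_projective_range {R A B M : Type*} [Ring R]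
    [AddCommGroup A] [Module R A] [AddCommGroup B] [Module R B] [AddCommGroup M] [Module R M]
    (d : A →ₗ[R] B) [Module.Projective R (LinearMap.range d)] (ψ : LinearMap.ker d →ₗ[R] M) :
    ∃ u : A →ₗ[R] M, u ∘ₗ (LinearMap.ker d).subtype = ψ := by
  obtain ⟨s, hs⟩ := Module.projective_lifting_property d.rangeRestrict LinearMap.id
    d.surjective_rangeRestrict
  have hρ : ∀ a, (LinearMap.id - s ∘ₗ d.rangeRestrict : A →ₗ[R] A) a ∈ LinearMap.ker d := by
    intro a
    have hds := congrArg Subtype.val (LinearMap.congr_fun hs (d.rangeRestrict a))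
    simp only [LinearMap.comp_apply, LinearMap.id_apply, LinearMap.codRestrict_apply] at hds
    simp [hds]
  refine ⟨ψ ∘ₗ LinearMap.codRestrict _ _ hρ, ?_⟩
  refine LinearMap.ext fun ⟨z, hz⟩ => congrArg ψ (Subtype.ext ?_)
  have hz0 : d.rangeRestrict z = 0 := Subtype.ext (LinearMap.mem_ker.1 hz)
  simp [hz0]

section CastHom

variable {F : ℤ → Type*} [∀ n, AddCommGroup (F n)]

@[simp] theorem castHom_self {a : ℤ} (h : a = a) (x : F a) : castHom F h x = x := rfl

@[simp] theorem castHom_castHom {a b c : ℤ} (h₁ : a = b) (h₂ : b = c) (x : F a) :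
    castHom F h₂ (castHom F h₁ x) = castHom F (h₁.trans h₂) x := by
  subst h₁ h₂; rfl

theorem castHom_eq_zero_iff {a b : ℤ} (h : a = b) {x : F a} : castHom F h x = 0 ↔ x = 0 := by
  subst h; rfl

theorem castHom_d (dF : ∀ n : ℤ, F n →+ F (n - 1)) {a b : ℤ} (h : a = b) (x : F a) :
    dF b (castHom F h x) = castHom F (congrArg (· - 1) h) (dF a x) := by
  subst h; rfl

theorem castHom_apply {A : ℤ → Type*} [∀ n, AddCommGroup (A n)] {M : Type*} [AddCommGroup M]
    {a b : ℤ} (h : a = b) (u : A a →+ M) (x : A b) :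
    castHom (fun k => A k →+ M) h u x = u (castHom A h.symm x) := by
  subst h; rfl

end CastHom

section Homology

variable {G : ℤ → Type*} [∀ n, AddCommGroup (G n)] (dG : ∀ n : ℤ, G n →+ G (n - 1))

theorem castHom_mem_cyclesSub {a b : ℤ} (h : a = b) {x : G a} (hx : x ∈ cyclesSub G dG a) :
    castHom G h x ∈ cyclesSub G dG b := by
  subst h; exact hx

theorem castHom_d_mem_boundariesSub {a b : ℤ} (h : a - 1 = b) (x : G a) :
    castHom G h (dG a x) ∈ boundariesSub G dG b := by
  subst h
  refine ⟨dG (a - 1 + 1) (castHom G (by ring) x), ⟨_, rfl⟩, ?_⟩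
  simp [castHom_d]

theorem castHom_d_mem_cyclesSub (hdG : ∀ n : ℤ, (dG (n - 1)).comp (dG n) = 0) {a b : ℤ}
    (h : a - 1 = b) (x : G a) : castHom G h (dG a x) ∈ cyclesSub G dG b :=
  castHom_mem_cyclesSub dG h (DFunLike.congr_fun (hdG a) x)

theorem homologyProj_eq_zero_of_mem_boundariesSub {n : ℤ} {x : G n}
    (hx : x ∈ cyclesSub G dG n) (hb : x ∈ boundariesSub G dG n) :
    homologyProj G dG n ⟨x, hx⟩ = 0 :=
  (QuotientAddGroup.eq_zero_iff _).2 (AddSubgroup.mem_addSubgroupOf.2 hb)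

theorem eq_zero_of_mem_boundariesSub_of_section (φ : ∀ n : ℤ, homologyGrp G dG n →+ G n)
    (hφmem : ∀ (n : ℤ) (x : homologyGrp G dG n), φ n x ∈ cyclesSub G dG n)
    (hπφ : ∀ (n : ℤ) (x : homologyGrp G dG n), homologyProj G dG n ⟨φ n x, hφmem n x⟩ = x)
    {n : ℤ} {c : homologyGrp G dG n} (hc : φ n c ∈ boundariesSub G dG n) : c = 0 := by
  rw [← hπφ n c]
  exact homologyProj_eq_zero_of_mem_boundariesSub dG _ hc

theorem d_eq_zero_of_section_eq_smul (φ : ∀ n : ℤ, homologyGrp G dG n →+ G n)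
    (hφmem : ∀ (n : ℤ) (x : homologyGrp G dG n), φ n x ∈ cyclesSub G dG n)
    (hπφ : ∀ (n : ℤ) (x : homologyGrp G dG n), homologyProj G dG n ⟨φ n x, hφmem n x⟩ = x)
    {a b : ℤ} (h : b - 1 = a) {c : homologyGrp G dG a} {z : G b}
    (u : ℤˣ) (hc : φ a c = (u : ℤ) • castHom G h (dG b z)) : dG b z = 0 := by
  have hc0 : c = 0 := eq_zero_of_mem_boundariesSub_of_section dG φ hφmem hπφ
    (hc ▸ zsmul_mem (castHom_d_mem_boundariesSub dG h z) _)
  rw [hc0, map_zero, eq_comm] at hc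
  rcases Int.units_eq_one_or u with rfl | rfl <;>
    simpa [castHom_eq_zero_iff] using hc

theorem exists_homologyProj_section_add_d_eq (hdG : ∀ n : ℤ, (dG (n - 1)).comp (dG n) = 0)
    (φ : ∀ n : ℤ, homologyGrp G dG n →+ G n)
    (hφmem : ∀ (n : ℤ) (x : homologyGrp G dG n), φ n x ∈ cyclesSub G dG n)
    (hπφ : ∀ (n : ℤ) (x : homologyGrp G dG n), homologyProj G dG n ⟨φ n x, hφmem n x⟩ = x)
    {a b : ℤ} (h : b - 1 = a) (c : homologyGrp G dG a) (z : G b) (k : ℤ) :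
    ∃ hw : φ a c + k • castHom G h (dG b z) ∈ cyclesSub G dG a,
      homologyProj G dG a ⟨_, hw⟩ = c := by
  have hz := castHom_d_mem_cyclesSub dG hdG h z
  refine ⟨add_mem (hφmem a c) (zsmul_mem hz k), ?_⟩
  change homologyProj G dG a (⟨φ a c, hφmem a c⟩ + k • ⟨_, hz⟩) = c
  rw [map_add, map_zsmul, hπφ,
    homologyProj_eq_zero_of_mem_boundariesSub dG hz (castHom_d_mem_boundariesSub dG h z),
    smul_zero, add_zero]

end Homology

section Cochains

variable {C : ℤ → Type*} [∀ n, AddCommGroup (C n)] (dC : ∀ n : ℤ, C n →+ C (n - 1))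
  {M : Type*} [AddCommGroup M]

theorem apply_d_eq_zero_of_mem_cocyclesSub {a b : ℤ} (h : b - 1 = a) {v : C a →+ M}
    (hv : v ∈ cocyclesSub C dC M a) (x : C b) : v (castHom C h (dC b x)) = 0 := by
  subst h
  simpa [dualD, castHom_d] using
    DFunLike.congr_fun (AddMonoidHom.mem_ker.1 hv) (castHom C (show b = b - 1 + 1 by ring) x)

theorem mem_coboundariesSub_iff {a b : ℤ} (h : b - 1 = a) (v : C b →+ M) :
    v ∈ coboundariesSub C dC M b ↔ ∃ u : C a →+ M, ∀ x, v x = u (castHom C h (dC b x)) := by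
  subst h
  constructor
  · rintro ⟨-, ⟨u, rfl⟩, rfl⟩
    exact ⟨u, fun x => by simp [castHom_apply, dualD, castHom_d]⟩
  · rintro ⟨u, hu⟩
    refine ⟨dualD C dC M (b - 1) u, ⟨u, rfl⟩, ?_⟩
    ext x
    simp [castHom_apply, dualD, castHom_d, hu]

end Cochains

section HomComplex

variable {C : ℤ → Type*} [∀ n, AddCommGroup (C n)] {G : ℤ → Type*} [∀ n, AddCommGroup (G n)]
  (dC : ∀ n : ℤ, C n →+ C (n - 1)) (dG : ∀ n : ℤ, G n →+ G (n - 1))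

abbrev homCoboundariesSub (p : ℤ) : AddSubgroup (∀ n : ℤ, C n →+ G (n - p)) :=
  ((bigDelta C G dC dG (p - 1)).range).map
    (castHom (fun q => ∀ n : ℤ, C n →+ G (n - q)) (show p - 1 + 1 = p by ring))

theorem castHom_pi_apply {a b : ℤ} (h : a = b) (u : ∀ n : ℤ, C n →+ G (n - a)) (n : ℤ)
    (x : C n) :
    castHom (fun q => ∀ n : ℤ, C n →+ G (n - q)) h u n x = castHom G (by rw [h]) (u n x) := by
  subst h; rfl

theorem mem_homCoboundariesSub_iff {p : ℤ} (w : ∀ n : ℤ, C n →+ G (n - p)) :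
    w ∈ homCoboundariesSub dC dG p ↔
      ∃ g : ∀ n : ℤ, C n →+ G (n - (p - 1)), ∀ (n : ℤ) (x : C n),
        w n x = castHom G (by ring) (g (n - 1) (dC n x))
          - ((p - 1).negOnePow : ℤ) • castHom G (by ring) (dG (n - (p - 1)) (g n x)) := by
  constructor
  · rintro ⟨-, ⟨g, rfl⟩, rfl⟩
    exact ⟨g, fun n x => by simp [castHom_pi_apply, bigDelta, homDelta]⟩
  · rintro ⟨g, hg⟩
    refine ⟨bigDelta C G dC dG (p - 1) g, ⟨g, rfl⟩, ?_⟩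
    funext n; ext x
    simp [castHom_pi_apply, bigDelta, homDelta, hg n x]

variable {dG} in
@[simps]
def alphaMap (φ : ∀ n : ℤ, homologyGrp G dG n →+ G n) (p : ℤ) :
    (∀ n : ℤ, C n →+ homologyGrp G dG (n - p)) →+ ∀ n : ℤ, C n →+ G (n - p) where
  toFun f k := (φ (k - p)).comp (f k)
  map_zero' := by funext k; ext; simp
  map_add' f f' := by funext k; ext; simp

variable (φ : ∀ n : ℤ, homologyGrp G dG n →+ G n)

theorem alphaMap_mem_ker
    (hφmem : ∀ (n : ℤ) (x : homologyGrp G dG n), φ n x ∈ cyclesSub G dG n)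
    {p : ℤ} {f : ∀ n : ℤ, C n →+ homologyGrp G dG (n - p)}
    (hf : ∀ n : ℤ, f n ∈ cocyclesSub C dC (homologyGrp G dG (n - p)) n) :
    alphaMap φ p f ∈ (bigDelta C G dC dG p).ker := by
  rw [AddMonoidHom.mem_ker]
  funext n; ext x
  have hf₁ : f (n - 1) (dC n x) = 0 := apply_d_eq_zero_of_mem_cocyclesSub dC rfl (hf (n - 1)) x
  have hφ : dG (n - p) (φ (n - p) (f n x)) = 0 := hφmem (n - p) (f n x)
  simp [bigDelta, homDelta, hf₁, hφ]

/-- Stated for every `n` with `n - 1 = k`, so that it applies at `n` itself and not only at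
`k + 1`, whose predecessor is not definitionally `k`. -/
theorem exists_cycle_lift_of_mem_coboundariesSub
    (hφmem : ∀ (n : ℤ) (x : homologyGrp G dG n), φ n x ∈ cyclesSub G dG n)
    {p : ℤ} {f : ∀ n : ℤ, C n →+ homologyGrp G dG (n - p)}
    (hf : ∀ n : ℤ, f n ∈ coboundariesSub C dC (homologyGrp G dG (n - p)) n) (k : ℤ) :
    ∃ g : C k →+ G (k - (p - 1)), (∀ y, g y ∈ cyclesSub G dG (k - (p - 1))) ∧
      ∀ (n : ℤ) (h : n - 1 = k) (x : C n),
        φ (n - p) (f n x) = castHom G (by omega) (g (castHom C h (dC n x))) := by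
  obtain ⟨u, hu⟩ := (mem_coboundariesSub_iff dC (show k + 1 - 1 = k by ring) _).1 (hf (k + 1))
  refine ⟨(castHom G (by ring)).comp ((φ (k + 1 - p)).comp u),
    fun y => castHom_mem_cyclesSub dG _ (hφmem _ _), fun n h x => ?_⟩
  obtain rfl : n = k + 1 := by omega
  simp [hu x]

theorem alphaMap_mem_homCoboundariesSub
    (hφmem : ∀ (n : ℤ) (x : homologyGrp G dG n), φ n x ∈ cyclesSub G dG n)
    {p : ℤ} {f : ∀ n : ℤ, C n →+ homologyGrp G dG (n - p)}
    (hf : ∀ n : ℤ, f n ∈ coboundariesSub C dC (homologyGrp G dG (n - p)) n) :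
    alphaMap φ p f ∈ homCoboundariesSub dC dG p := by
  choose g hg_cyc hg using exists_cycle_lift_of_mem_coboundariesSub dC dG φ hφmem hf
  refine (mem_homCoboundariesSub_iff dC dG _).2 ⟨g, fun n x => ?_⟩
  have hd : dG (n - (p - 1)) (g n x) = 0 := hg_cyc n x
  simp [hd, hg (n - 1) n rfl x]

theorem mem_coboundariesSub_of_alphaMap_mem_homCoboundariesSub
    [∀ n, Module.Free ℤ (C n)] [∀ n, Module.Finite ℤ (C n)]
    (hdC : ∀ n : ℤ, (dC (n - 1)).comp (dC n) = 0)
    (hdG : ∀ n : ℤ, (dG (n - 1)).comp (dG n) = 0)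
    (hφmem : ∀ (n : ℤ) (x : homologyGrp G dG n), φ n x ∈ cyclesSub G dG n)
    (hπφ : ∀ (n : ℤ) (x : homologyGrp G dG n), homologyProj G dG n ⟨φ n x, hφmem n x⟩ = x)
    {p : ℤ} {f : ∀ n : ℤ, C n →+ homologyGrp G dG (n - p)}
    (hf : alphaMap φ p f ∈ homCoboundariesSub dC dG p) (m : ℤ) :
    f m ∈ coboundariesSub C dC (homologyGrp G dG (m - p)) m := by
  obtain ⟨g, hg⟩ := (mem_homCoboundariesSub_iff dC dG _).1 hf
  simp only [alphaMap_apply, AddMonoidHom.comp_apply] at hg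
  have hcyc : ∀ y : C (m - 1), dC (m - 1) y = 0 →
      castHom G (show m - 1 - (p - 1) = m - p by ring) (g (m - 1) y) ∈ cyclesSub G dG (m - p) := by
    intro y hy
    refine castHom_mem_cyclesSub dG _ (d_eq_zero_of_section_eq_smul dG φ hφmem hπφ
      (show m - 1 - (p - 1) - 1 = m - 1 - p by ring) (c := f (m - 1) y) (-(p - 1).negOnePow) ?_)
    simpa [hy] using hg (m - 1) y
  have hbd : ∀ x : C m, ∃ hz, homologyProj G dG (m - p)
      ⟨castHom G (show m - 1 - (p - 1) = m - p by ring) (g (m - 1) (dC m x)), hz⟩ = f m x := by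
    intro x
    have hgx : castHom G (show m - 1 - (p - 1) = m - p by ring) (g (m - 1) (dC m x)) =
        φ (m - p) (f m x) + ((p - 1).negOnePow : ℤ) •
          castHom G (show m - (p - 1) - 1 = m - p by ring) (dG (m - (p - 1)) (g m x)) := by
      rw [hg m x, sub_add_cancel]
    simp only [hgx]
    exact exists_homologyProj_section_add_d_eq dG hdG φ hφmem hπφ _ _ _ _
  let ψ : LinearMap.ker (dC (m - 1)).toIntLinearMap →ₗ[ℤ] homologyGrp G dG (m - p) :=
    ((homologyProj G dG (m - p)).comp (AddMonoidHom.codRestrict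
      (((castHom G (by ring)).comp (g (m - 1))).comp
        (LinearMap.ker (dC (m - 1)).toIntLinearMap).subtype.toAddMonoidHom)
      _ fun y => hcyc y y.2)).toIntLinearMap
  obtain ⟨u, hu⟩ := LinearMap.exists_extend_ker_of_projective_range _ ψ
  refine (mem_coboundariesSub_iff dC rfl _).2 ⟨u.toAddMonoidHom, fun x => ?_⟩
  obtain ⟨_, hfx⟩ := hbd x
  rw [← hfx, castHom_self]
  exact (LinearMap.congr_fun hu ⟨dC m x, DFunLike.congr_fun (hdC m) x⟩).symm

end HomComplex

theorem alpha_well_defined_injective_general (C : ℤ → Type*) [∀ n, AddCommGroup (C n)]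
    [∀ n, Module.Free ℤ (C n)] [∀ n, Module.Finite ℤ (C n)]
    (dC : ∀ n : ℤ, C n →+ C (n - 1))
    (hdC : ∀ n : ℤ, (dC (n - 1)).comp (dC n) = 0)
    (G : ℤ → Type*) [∀ n, AddCommGroup (G n)]
    (dG : ∀ n : ℤ, G n →+ G (n - 1))
    (hdG : ∀ n : ℤ, (dG (n - 1)).comp (dG n) = 0)
    (φ : ∀ n : ℤ, homologyGrp G dG n →+ G n)
    (hφmem : ∀ (n : ℤ) (x : homologyGrp G dG n), φ n x ∈ cyclesSub G dG n)
    (hπφ : ∀ (n : ℤ) (x : homologyGrp G dG n), homologyProj G dG n ⟨φ n x, hφmem n x⟩ = x)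
    (p : ℤ) :
    ∃ α : (∀ n : ℤ, cohomologyGrp C dC (homologyGrp G dG (n - p)) n) →+
        homComplexCohomology C G dC dG p,
      Function.Injective α ∧
      ∀ (f : ∀ n : ℤ, C n →+ homologyGrp G dG (n - p))
        (hf : ∀ n : ℤ, f n ∈ cocyclesSub C dC (homologyGrp G dG (n - p)) n)
        (hker : (fun k => (φ (k - p)).comp (f k)) ∈ (bigDelta C G dC dG p).ker),
        α (fun n => QuotientAddGroup.mk ⟨f n, hf n⟩) =
          QuotientAddGroup.mk ⟨fun k => (φ (k - p)).comp (f k), hker⟩ := by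
  let Z n := cocyclesSub C dC (homologyGrp G dG (n - p)) n
  let cocycle : (∀ n, Z n) →+ (bigDelta C G dC dG p).ker :=
    ((alphaMap φ p).comp (AddMonoidHom.piMap fun n => (Z n).subtype)).codRestrict _
      fun s => alphaMap_mem_ker dC dG φ hφmem fun n => (s n).2
  have hker : ((QuotientAddGroup.mk' ((homCoboundariesSub dC dG p).addSubgroupOf
        (bigDelta C G dC dG p).ker)).comp cocycle).ker =
      (AddMonoidHom.piMap fun n => QuotientAddGroup.mk'
        ((coboundariesSub C dC _ n).addSubgroupOf (Z n))).ker := by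
    ext s
    simp only [AddMonoidHom.mem_ker, AddMonoidHom.comp_apply, QuotientAddGroup.mk'_apply,
      AddMonoidHom.piMap_apply, Pi.zero_apply, QuotientAddGroup.eq_zero_iff,
      AddSubgroup.mem_addSubgroupOf, funext_iff]
    exact ⟨mem_coboundariesSub_of_alphaMap_mem_homCoboundariesSub dC dG φ hdC hdG hφmem hπφ,
      alphaMap_mem_homCoboundariesSub dC dG φ hφmem⟩
  obtain ⟨α, hinj, hα⟩ := AddMonoidHom.exists_injective_comp_eq_of_ker_eq _
    (Function.Surjective.piMap fun n => QuotientAddGroup.mk'_surjective _) _ hker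
  exact ⟨α, hinj, fun f hf _ => hα fun n => ⟨f n, hf n⟩⟩

/-- the assignment `([f_n])_n ↦ [α_φ(f)]` is a well-defined injective group
homomorphism `α_φ^p : ∏_n H^n(C, H_{n-p}(G)) → H^p(C,G)`; in particular its value does not
depend on the chosen cocycle representatives `f_n`. -/
theorem alpha_well_defined_injective (C : ℤ → Type*) [∀ n, AddCommGroup (C n)]
    [∀ n, Module.Free ℤ (C n)] [∀ n, Module.Finite ℤ (C n)]
    (dC : ∀ n : ℤ, C n →+ C (n - 1))
    (hdC : ∀ n : ℤ, (dC (n - 1)).comp (dC n) = 0)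
    (hCfin : {n : ℤ | Nontrivial (C n)}.Finite)
    (G : ℤ → Type*) [∀ n, AddCommGroup (G n)] [∀ n, Finite (G n)]
    (dG : ∀ n : ℤ, G n →+ G (n - 1))
    (hdG : ∀ n : ℤ, (dG (n - 1)).comp (dG n) = 0)
    (hGfin : {n : ℤ | Nontrivial (G n)}.Finite)
    (φ : ∀ n : ℤ, homologyGrp G dG n →+ G n)
    (hφmem : ∀ (n : ℤ) (x : homologyGrp G dG n), φ n x ∈ cyclesSub G dG n)
    (hπφ : ∀ (n : ℤ) (x : homologyGrp G dG n), homologyProj G dG n ⟨φ n x, hφmem n x⟩ = x)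
    (p : ℤ) :
    ∃ α : (∀ n : ℤ, cohomologyGrp C dC (homologyGrp G dG (n - p)) n) →+
        homComplexCohomology C G dC dG p,
      Function.Injective α ∧
      ∀ (f : ∀ n : ℤ, C n →+ homologyGrp G dG (n - p))
        (hf : ∀ n : ℤ, f n ∈ cocyclesSub C dC (homologyGrp G dG (n - p)) n)
        (hker : (fun k => (φ (k - p)).comp (f k)) ∈ (bigDelta C G dC dG p).ker),
        α (fun n => QuotientAddGroup.mk ⟨f n, hf n⟩) =
          QuotientAddGroup.mk ⟨fun k => (φ (k - p)).comp (f k), hker⟩ :=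
  alpha_well_defined_injective_general C dC hdC G dG hdG φ hφmem hπφ p
end
end
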